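/- A functor u : F ⥤ G over E between Grothendieck fibrations is an equivalence of categories if and only if u is a cartesian functor and for every object S of E the induced functor on fibres u_S : F_S ⥤ G_S is an equivalence of categories. -/

import Mathlib

/-!
An equivalence `u` over `E` is bijective on the lifts of every base arrow, so it preserves
strongly cartesian arrows and is fully faithful on fibres; a preimage of an object of `G_S` is
moved into `F_S` along a cartesian lift of an isomorphism, which is again an isomorphism.
Conversely, in a fibration every `χ : a ⟶ b` factors as a vertical arrow followed by a cartesian
lift of `p χ`. As `u` preserves cartesian arrows, `u` on such factorisations is `u_S` on the
vertical parts, so fibrewise full faithfulness gives full faithfulness; every object of `G` lies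
in its own fibre, which gives essential surjectivity.
-/

open CategoryTheory CategoryTheory.Limits CategoryTheory.Functor

universe w₁ w₂ w₃ w₄ v₁ v₂ v₃ v₄

namespace PaperStacks

/-- A functor `p : A ⥤ B` is an isofibration if every isomorphism `f : p.obj a ≅ b` in `B`
lifts to an isomorphism `e : a ≅ a'` in `A` with `p.obj a' = b` and `p.map e.hom = f.hom`
(up to the identification `p.obj a' = b`). -/
def IsIsofibration {A : Type w₁} {B : Type w₂} [Category.{v₁} A] [Category.{v₂} B]
    (p : A ⥤ B) : Prop :=
  ∀ (a : A) (b : B) (f : p.obj a ≅ b), ∃ (a' : A) (e : a ≅ a') (h : p.obj a' = b),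
    p.map e.hom = f.hom ≫ eqToHom h.symm

/-- A surjective equivalence: an equivalence of categories that is surjective on objects. -/
def IsSurjectiveEquivalence {A : Type w₁} {B : Type w₂} [Category.{v₁} A] [Category.{v₂} B]
    (p : A ⥤ B) : Prop :=
  p.IsEquivalence ∧ Function.Surjective p.obj

/-- The functor induced on fibre categories by a functor `u : F ⥤ G` over `E`. -/
def fiberMap {E : Type w₁} {F : Type w₂} {G : Type w₃}
    [Category.{v₁} E] [Category.{v₂} F] [Category.{v₃} G]
    {p : F ⥤ E} {q : G ⥤ E} (u : F ⥤ G) (h : u ⋙ q = p) (S : E) :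
    Functor.Fiber p S ⥤ Functor.Fiber q S :=
  Functor.Fiber.inducedFunctor (F := Functor.Fiber.fiberInclusion ⋙ u)
    (by rw [Functor.assoc, h]; exact Functor.Fiber.fiberInclusion_comp_eq_const)

open IsHomLift

section

variable {E : Type w₁} {F : Type w₂} {G : Type w₃}
    [Category.{v₁} E] [Category.{v₂} F] [Category.{v₃} G]

def IsCartesianFunctor (p : F ⥤ E) (q : G ⥤ E) (u : F ⥤ G) : Prop :=
  ∀ ⦃a b : F⦄ (φ : a ⟶ b) ⦃R S : E⦄ (f : R ⟶ S),
    p.IsStronglyCartesian f φ → q.IsStronglyCartesian f (u.map φ)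

def fiberIsoMk {q : G ⥤ E} {S : E} {a b : Functor.Fiber q S} (e : a.1 ≅ b.1)
    (he : q.IsHomLift (𝟙 S) e.hom) : a ≅ b where
  hom := ⟨e.hom, he⟩
  inv := ⟨e.inv, inferInstance⟩
  hom_inv_id := Fiber.hom_ext e.hom_inv_id
  inv_hom_id := Fiber.hom_ext e.inv_hom_id

lemma exists_iso_isHomLift_of_isFibered (p : F ⥤ E) [p.IsFibered] {a : F} {S : E}
    (f : S ⟶ p.obj a) [IsIso f] : ∃ (a' : F) (e : a' ≅ a), p.IsHomLift f e.hom := by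
  obtain ⟨a', θ, _⟩ := IsPreFibered.exists_isCartesian' f
  have : IsIso θ := IsStronglyCartesian.isIso_of_base_isIso p f θ
  exact ⟨a', asIso θ, inferInstanceAs (p.IsHomLift f θ)⟩

variable {p : F ⥤ E} {q : G ⥤ E} (u : F ⥤ G)

lemma isHomLift_map_iff (hu : u ⋙ q = p) {R S : E} {a b : F} (f : R ⟶ S) (φ : a ⟶ b) :
    q.IsHomLift f (u.map φ) ↔ p.IsHomLift f φ :=
  BasedFunctor.isHomLift_iff (𝒳 := BasedCategory.ofFunctor p) (𝒴 := BasedCategory.ofFunctor q)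
    ⟨u, hu⟩ f φ

instance isHomLift_map_of_isHomLift_comp {R S : E} {a b : F} (f : R ⟶ S) (φ : a ⟶ b)
    [(u ⋙ q).IsHomLift f φ] : q.IsHomLift f (u.map φ) :=
  (isHomLift_map_iff u rfl f φ).2 inferInstance

lemma isHomLift_preimage_iff [u.Full] (hu : u ⋙ q = p) {R S : E} {a b : F} (f : R ⟶ S)
    (ψ : u.obj a ⟶ u.obj b) : p.IsHomLift f (u.preimage ψ) ↔ q.IsHomLift f ψ := by
  rw [← isHomLift_map_iff u hu, u.map_preimage]

lemma eq_of_map_eq_of_isHomLift_id (hu : u ⋙ q = p) {S : E} [(fiberMap u hu S).Faithful]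
    {a b : F} (τ₁ τ₂ : a ⟶ b) [p.IsHomLift (𝟙 S) τ₁] [p.IsHomLift (𝟙 S) τ₂]
    (h : u.map τ₁ = u.map τ₂) : τ₁ = τ₂ :=
  congrArg Subtype.val <| (fiberMap u hu S).map_injective (a₁ := Fiber.homMk p S τ₁)
    (a₂ := Fiber.homMk p S τ₂) (Fiber.hom_ext h)

lemma exists_map_eq_of_isHomLift_id (hu : u ⋙ q = p) {S : E} [(fiberMap u hu S).Full]
    {a b : F} (ψ : u.obj a ⟶ u.obj b) [hψ : q.IsHomLift (𝟙 S) ψ] :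
    ∃ τ : a ⟶ b, p.IsHomLift (𝟙 S) τ ∧ u.map τ = ψ := by
  subst hu
  let ψ' : (fiberMap u rfl S).obj (Fiber.mk (p := u ⋙ q) (domain_eq q (𝟙 S) ψ)) ⟶
      (fiberMap u rfl S).obj (Fiber.mk (p := u ⋙ q) (codomain_eq q (𝟙 S) ψ)) :=
    ⟨ψ, hψ⟩
  obtain ⟨τ, hτ⟩ := (fiberMap u rfl S).map_surjective ψ'
  exact ⟨τ.1, τ.2, congrArg Subtype.val hτ⟩

instance fiberMap_faithful (hu : u ⋙ q = p) (S : E) [u.Faithful] : (fiberMap u hu S).Faithful :=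
  ⟨fun h => Fiber.hom_ext (u.map_injective (congrArg Subtype.val h))⟩

instance fiberMap_full (hu : u ⋙ q = p) (S : E) [u.Full] : (fiberMap u hu S).Full := by
  refine ⟨fun {X Y} ψ => ?_⟩
  let ψ' : u.obj (Fiber.fiberInclusion.obj X) ⟶ u.obj (Fiber.fiberInclusion.obj Y) :=
    Fiber.fiberInclusion.map ψ
  exact ⟨⟨u.preimage ψ', (isHomLift_preimage_iff u hu _ ψ').2 ψ.2⟩,
    Fiber.hom_ext (u.map_preimage ψ')⟩

lemma fiberMap_essSurj_of_isEquivalence [p.IsFibered] [u.IsEquivalence] (hu : u ⋙ q = p)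
    (S : E) : (fiberMap u hu S).EssSurj := by
  subst hu
  refine ⟨fun c => ?_⟩
  let δ := u.objObjPreimageIso c.1
  let e : q.obj (u.obj (u.objPreimage c.1)) ⟶ S := q.map δ.hom ≫ eqToHom c.2
  obtain ⟨a, θ, hθ⟩ := exists_iso_isHomLift_of_isFibered (u ⋙ q) (inv e)
  have hlift : q.IsHomLift (𝟙 S) (u.mapIso θ ≪≫ δ).hom := by
    simpa using IsHomLift.comp q (inv e) e (u.map θ.hom) δ.hom
  exact ⟨⟨a, domain_eq (u ⋙ q) (inv e) θ.hom⟩, ⟨fiberIsoMk (u.mapIso θ ≪≫ δ) hlift⟩⟩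

lemma essSurj_of_fiberMap_essSurj (hu : u ⋙ q = p) (h : ∀ S, (fiberMap u hu S).EssSurj) :
    u.EssSurj := by
  subst hu
  exact ⟨fun c => ⟨_, ⟨Fiber.fiberInclusion.mapIso
    ((fiberMap u rfl (q.obj c)).objObjPreimageIso (Fiber.mk (p := q) rfl))⟩⟩⟩

lemma isCartesianFunctor_of_isEquivalence [u.IsEquivalence] (hu : u ⋙ q = p) :
    IsCartesianFunctor p q u := by
  subst hu
  intro a b φ R S f _
  refine ⟨fun {c} g ψ _ => ?_⟩
  -- lifts out of `c` correspond to lifts out of `u.obj c₀ ≅ c`, which `u` reflects bijectively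
  let δ := u.objObjPreimageIso c
  let g₀ := q.map δ.hom ≫ g
  let ψ₀ := u.preimage (δ.hom ≫ ψ)
  have : (u ⋙ q).IsHomLift (g₀ ≫ f) ψ₀ := by
    rw [isHomLift_preimage_iff u rfl, Category.assoc]; infer_instance
  obtain ⟨τ, ⟨_, hτ⟩, hτ_uniq⟩ := IsStronglyCartesian.universal_property (u ⋙ q) f φ g₀ _ rfl ψ₀
  refine ⟨δ.inv ≫ u.map τ, ⟨?_, ?_⟩, fun π ⟨_, hπ⟩ => ?_⟩
  · have : q.IsHomLift (q.mapIso δ).hom δ.hom := IsHomLift.map q δ.hom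
    simpa [g₀] using IsHomLift.comp q (q.mapIso δ).inv g₀ δ.inv (u.map τ)
  · simp [← u.map_comp, hτ, ψ₀]
  · have : (u ⋙ q).IsHomLift g₀ (u.preimage (δ.hom ≫ π)) := by
      rw [isHomLift_preimage_iff u rfl]; infer_instance
    have hπτ : u.preimage (δ.hom ≫ π) = τ :=
      hτ_uniq _ ⟨this, u.map_injective (by simp [ψ₀, hπ])⟩
    rw [← hπτ, u.map_preimage, Iso.inv_hom_id_assoc]

lemma faithful_of_fiberMap_faithful [p.IsFibered] (hu : u ⋙ q = p)
    (hcart : IsCartesianFunctor p q u) (h : ∀ S, (fiberMap u hu S).Faithful) : u.Faithful := by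
  subst hu
  refine ⟨fun {a b} χ₁ χ₂ hχ => ?_⟩
  let f := (u ⋙ q).map χ₁
  obtain ⟨b', ψ, _⟩ := IsPreFibered.exists_isCartesian' f
  have := hcart ψ f inferInstance
  have : (u ⋙ q).IsHomLift f χ₂ := by
    rw [show f = (u ⋙ q).map χ₂ by simp [f, hχ]]; exact IsHomLift.map (u ⋙ q) χ₂
  have := h ((u ⋙ q).obj a)
  have hτ : u.map (IsCartesian.map (u ⋙ q) f ψ χ₁) = u.map (IsCartesian.map (u ⋙ q) f ψ χ₂) :=
    IsStronglyCartesian.ext q f (u.map ψ) (𝟙 _) (by simp only [← u.map_comp, IsCartesian.fac, hχ])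
  rw [← IsCartesian.fac (u ⋙ q) f ψ χ₁, ← IsCartesian.fac (u ⋙ q) f ψ χ₂,
    eq_of_map_eq_of_isHomLift_id (q := q) (S := (u ⋙ q).obj a) u rfl _ _ hτ]

lemma full_of_fiberMap_full [p.IsFibered] (hu : u ⋙ q = p) (hcart : IsCartesianFunctor p q u)
    (h : ∀ S, (fiberMap u hu S).Full) : u.Full := by
  subst hu
  refine ⟨fun {a b} ψ => ?_⟩
  obtain ⟨b', φ, _⟩ := IsPreFibered.exists_isCartesian' (p := u ⋙ q) (q.map ψ)
  have := hcart φ (q.map ψ) inferInstance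
  have := h ((u ⋙ q).obj a)
  obtain ⟨τ, _, hτ⟩ := exists_map_eq_of_isHomLift_id (q := q) (S := q.obj (u.obj a)) u rfl
    (IsCartesian.map q (q.map ψ) (u.map φ) ψ)
  exact ⟨τ ≫ φ, by rw [u.map_comp, hτ, IsCartesian.fac]⟩

end

theorem equivalence_iff_cartesian_and_fiberwise_equivalence_general
    {E : Type w₁} {F : Type w₂} {G : Type w₃}
    [Category.{v₁} E] [Category.{v₂} F] [Category.{v₃} G]
    {p : F ⥤ E} {q : G ⥤ E} (u : F ⥤ G) (hu : u ⋙ q = p)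
    (hp : p.IsFibered) :
    u.IsEquivalence ↔
      ((∀ ⦃a b : F⦄ (φ : a ⟶ b) ⦃R S : E⦄ (f : R ⟶ S),
          p.IsStronglyCartesian f φ → q.IsStronglyCartesian f (u.map φ)) ∧
        ∀ S : E, (fiberMap u hu S).IsEquivalence) := by
  constructor
  · intro _
    refine ⟨isCartesianFunctor_of_isEquivalence u hu, fun S => ?_⟩
    have := fiberMap_essSurj_of_isEquivalence u hu S
    exact { }
  · rintro ⟨hcart, hfib⟩
    have := faithful_of_fiberMap_faithful u hu hcart fun S => (hfib S).faithful
    have := full_of_fiberMap_full u hu hcart fun S => (hfib S).full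
    have := essSurj_of_fiberMap_essSurj u hu fun S => (hfib S).essSurj
    exact { }

/-- A functor `u : F ⥤ G` over `E` between Grothendieck fibrations is an
equivalence of categories if and only if `u` is a cartesian functor and every induced
functor on fibre categories is an equivalence of categories. -/
theorem equivalence_iff_cartesian_and_fiberwise_equivalence
    {E : Type w₁} {F : Type w₂} {G : Type w₃}
    [Category.{v₁} E] [Category.{v₂} F] [Category.{v₃} G]
    {p : F ⥤ E} {q : G ⥤ E} (u : F ⥤ G) (hu : u ⋙ q = p)
    (hp : p.IsFibered) (hq : q.IsFibered) :
    u.IsEquivalence ↔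
      ((∀ ⦃a b : F⦄ (φ : a ⟶ b) ⦃R S : E⦄ (f : R ⟶ S),
          p.IsStronglyCartesian f φ → q.IsStronglyCartesian f (u.map φ)) ∧
        ∀ S : E, (fiberMap u hu S).IsEquivalence) :=
  equivalence_iff_cartesian_and_fiberwise_equivalence_general u hu hp

end PaperStacks
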